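/- arXiv:1505.01667 — 4 statements merged into one kernel-verified Lean document; each statement's English description precedes it below -/
import Mathlib

section
/- For odd n, the coefficient of x in the characteristic polynomial 𝒜(x) of A' equals the (n−1)-st elementary symmetric polynomial in the variables a_0, ..., a_{n−1}, i.e., 𝒜'(0) = ∑_{k=0}^{n−1} ∏_{j≠k} a_j. -/
open Matrix

/-- The `n×n` matrix `A'` with `A'_{k,k+1} = a_{k+1}`, `A'_{k+1,k} = -a_k`,
`A'_{0,n-1} = -a_{n-1}`, `A'_{n-1,0} = a_0` and zeros elsewhere. -/
def Amat (a : ℕ → ℝ) (n : ℕ) : Matrix (Fin n) (Fin n) ℝ :=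
  Matrix.of fun i j =>
    if (j : ℕ) = (i : ℕ) + 1 then a ((i : ℕ) + 1)
    else if (i : ℕ) = (j : ℕ) + 1 then -a (j : ℕ)
    else if (i : ℕ) = 0 ∧ (j : ℕ) = n - 1 then -a (n - 1)
    else if (i : ℕ) = n - 1 ∧ (j : ℕ) = 0 then a 0
    else 0

noncomputable def rowsU (n : ℕ) : Fin n → (Fin n → ℝ) := fun i => Pi.single i 1

lemma det_as_sum {n : ℕ} (A : Matrix (Fin n) (Fin n) ℝ) (x : ℝ) :
    (x • (1 : Matrix (Fin n) (Fin n) ℝ) - A).det =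
      ∑ s : Finset (Fin n), x ^ s.card *
        (Matrix.of (s.piecewise (rowsU n) (fun i => (-A) i))).det := by
  classical
  set u : Fin n → (Fin n → ℝ) := rowsU n with hu
  set v : Fin n → (Fin n → ℝ) := fun i => (-A) i with hv
  have h1 : (x • (1 : Matrix (Fin n) (Fin n) ℝ) - A) =
      Matrix.of ((fun i => x • u i) + v) := by
    funext i j
    simp [Matrix.one_apply, Pi.single_apply, sub_eq_add_neg, mul_ite, eq_comm, hu, hv, rowsU]
  rw [h1]
  have key : ∀ (m m' : Fin n → (Fin n → ℝ)),
      (Matrix.of (m + m')).det = ∑ s : Finset (Fin n), (Matrix.of (s.piecewise m m')).det := by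
    intro m m'
    exact (Matrix.detRowAlternating (R := ℝ) (n := Fin n)).toMultilinearMap.map_add_univ m m'
  rw [key]
  refine Finset.sum_congr rfl fun s _ => ?_
  have h2 : s.piecewise (fun i => x • u i) v
      = s.piecewise (fun i => x • (s.piecewise u v) i) (s.piecewise u v) := by
    funext i
    by_cases hi : i ∈ s <;>
      simp [Finset.piecewise_eq_of_mem, hi, Finset.piecewise_eq_of_notMem]
  rw [h2]
  have h3 := (Matrix.detRowAlternating (R := ℝ) (n := Fin n)).toMultilinearMap.map_piecewise_smul
    (fun _ : Fin n => x) (s.piecewise u v) s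
  simp [Finset.prod_const, smul_eq_mul] at h3 ⊢
  exact h3

lemma deriv_det_trace {n : ℕ} (A : Matrix (Fin n) (Fin n) ℝ) :
    deriv (fun x : ℝ => (x • (1 : Matrix (Fin n) (Fin n) ℝ) - A).det) 0
      = (adjugate (-A)).trace := by
  classical
  set c : Finset (Fin n) → ℝ :=
    fun s => (Matrix.of (s.piecewise (rowsU n) (fun i => (-A) i))).det with hc
  have hfun : (fun x : ℝ => (x • (1 : Matrix (Fin n) (Fin n) ℝ) - A).det)
      = fun x => ∑ s : Finset (Fin n), x ^ s.card * c s := funext fun x => det_as_sum A x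
  rw [hfun]
  have h : HasDerivAt (fun x : ℝ => ∑ s : Finset (Fin n), x ^ s.card * c s)
      (∑ s : Finset (Fin n), if s.card = 1 then c s else 0) 0 := by
    apply HasDerivAt.fun_sum
    intro s _
    have h1 := (hasDerivAt_pow s.card (0:ℝ)).mul_const (c s)
    convert h1 using 1
    · rfl
    rcases hs : s.card with _ | k
    · simp
    · rcases k with _ | k
      · simp
      · simp [pow_succ]
  rw [h.deriv]
  rw [← Finset.sum_filter]
  have himg : (Finset.univ.filter (fun s : Finset (Fin n) => s.card = 1))
      = Finset.univ.image (fun i : Fin n => ({i} : Finset (Fin n))) := by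
    ext s
    simp [Finset.card_eq_one, eq_comm]
  rw [himg, Finset.sum_image (fun i _ j _ h => Finset.singleton_injective h)]
  have hsingle : ∀ i : Fin n, c {i} = adjugate (-A) i i := by
    intro i
    show (Matrix.of (({i} : Finset (Fin n)).piecewise (rowsU n) (fun k => (-A) k))).det
      = adjugate (-A) i i
    rw [Finset.piecewise_singleton, adjugate_apply]
    rfl
  rw [Matrix.trace]
  exact Finset.sum_congr rfl fun i _ => by rw [hsingle i]; rfl

def Tri (m : ℕ) : Matrix (Fin m) (Fin m) ℝ :=
  Matrix.of fun i j => if (j:ℕ) = (i:ℕ)+1 then 1 else if (i:ℕ) = (j:ℕ)+1 then -1 else 0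

lemma tri_apply (m : ℕ) (i j : Fin m) :
    Tri m i j = if (j:ℕ) = (i:ℕ)+1 then 1 else if (i:ℕ) = (j:ℕ)+1 then -1 else 0 := rfl

lemma val_succAbove_one_zero (m : ℕ) : ((Fin.succAbove (1 : Fin (m+2)) 0) : ℕ) = 0 := by
  rw [Fin.succAbove_of_castSucc_lt]
  · rfl
  · rw [Fin.lt_def]; simp [Fin.val_one]

lemma val_succAbove_one_succ (m : ℕ) (i : Fin m) :
    ((Fin.succAbove (1 : Fin (m+2)) (Fin.succ i)) : ℕ) = (i:ℕ) + 2 := by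
  rw [Fin.succAbove_of_le_castSucc]
  · rfl
  · rw [Fin.le_def]
    simp [Fin.val_one]

lemma tri_step (m : ℕ) : (Tri (m+2)).det = (Tri m).det := by
  rw [det_succ_column_zero]
  rw [Finset.sum_eq_single (1 : Fin (m+2))]
  · have hB : ∀ j : Fin (m+1), ((Tri (m+2)).submatrix (Fin.succAbove 1) Fin.succ) 0 j
        = if (j:ℕ) = 0 then 1 else 0 := by
      intro j
      rw [submatrix_apply, tri_apply]
      rw [show ((Fin.succAbove (1 : Fin (m+2)) 0) : ℕ) = 0 from val_succAbove_one_zero m]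
      rw [Fin.val_succ]
      by_cases hj : (j:ℕ) = 0
      · simp [hj]
      · have h1 : ¬ ((j:ℕ) + 1 = 0 + 1) := by omega
        have h2 : ¬ ((0:ℕ) = (j:ℕ) + 1 + 1) := by omega
        simp [hj, h1, h2]
    rw [det_succ_row_zero]
    rw [Finset.sum_eq_single (0 : Fin (m+1))]
    · have hC : ((Tri (m+2)).submatrix (Fin.succAbove 1) Fin.succ).submatrix Fin.succ
          (Fin.succAbove 0) = Tri m := by
        ext i j
        rw [submatrix_apply, submatrix_apply, Fin.succAbove_zero, tri_apply, tri_apply]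
        rw [Fin.val_succ, Fin.val_succ, val_succAbove_one_succ m i]
        by_cases t1 : (j:ℕ) = (i:ℕ) + 1
        · have c1 : (j:ℕ) + 1 + 1 = (i:ℕ) + 2 + 1 := by omega
          simp [t1, c1]
        · by_cases t2 : (i:ℕ) = (j:ℕ) + 1
          · have c1 : ¬ ((j:ℕ) + 1 + 1 = (i:ℕ) + 2 + 1) := by omega
            have c2 : (i:ℕ) + 2 = (j:ℕ) + 1 + 1 + 1 := by omega
            simp [t1, t2, c1, c2, show ¬((j:ℕ) = (j:ℕ)+1+1) from by omega]
          · have c1 : ¬ ((j:ℕ) + 1 + 1 = (i:ℕ) + 2 + 1) := by omega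
            have c2 : ¬ ((i:ℕ) + 2 = (j:ℕ) + 1 + 1 + 1) := by omega
            simp [t1, t2, c1, c2]
      rw [hC, hB]
      have h10 : Tri (m+2) 1 0 = -1 := by
        rw [tri_apply]
        rw [show ((1:Fin (m+2)):ℕ) = 1 from Fin.val_one m, show ((0:Fin (m+2)):ℕ) = 0 from rfl]
        norm_num
      rw [h10]
      simp
    · intro j _ hj
      rw [hB]
      have : (j:ℕ) ≠ 0 := fun h => hj (Fin.ext (by simpa using h))
      simp [this]
    · simp
  · intro i _ hi
    have : Tri (m+2) i 0 = 0 := by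
      rw [tri_apply]
      have h1 : (i:ℕ) ≠ 1 := fun h => hi (Fin.ext (by rw [h]; exact (Fin.val_one m).symm))
      have c1 : ¬ ((0:Fin (m+2)) : ℕ) = (i:ℕ) + 1 := by simp
      have c2 : ¬ ((i:ℕ) = ((0:Fin (m+2)) : ℕ) + 1) := by
        simp only [Fin.val_zero, Nat.zero_add]; exact h1
      simp [c1, c2, h1]
    rw [this]; ring
  · simp

lemma det_tri_even : ∀ k : ℕ, (Tri (2*k)).det = 1 := by
  intro k
  induction k with
  | zero => simp [Matrix.det_fin_zero]
  | succ k ih => rw [Nat.mul_succ, tri_step, ih]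

def Tmat (n : ℕ) [NeZero n] : Matrix (Fin n) (Fin n) ℝ :=
  Matrix.of fun i j => if j = i + 1 then 1 else if i = j + 1 then -1 else 0

section
variable (n : ℕ) [NeZero n]

lemma fin_add_one_iff (hn : 3 ≤ n) (i j : Fin n) :
    j = i + 1 ↔ ((j:ℕ) = (i:ℕ)+1 ∨ ((i:ℕ) = n-1 ∧ (j:ℕ) = 0)) := by
  have hi := i.isLt
  have hj := j.isLt
  rw [Fin.ext_iff, Fin.val_add, Fin.val_one']
  rw [show (1 % n) = 1 from Nat.mod_eq_of_lt (by omega)]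
  by_cases h : (i:ℕ) + 1 = n
  · rw [h, Nat.mod_self]; omega
  · rw [Nat.mod_eq_of_lt (by omega)]; omega

lemma Tmat_apply_nat (hn : 3 ≤ n) (i j : Fin n) :
    Tmat n i j = if ((j:ℕ) = (i:ℕ)+1 ∨ ((i:ℕ) = n-1 ∧ (j:ℕ) = 0)) then 1
      else if ((i:ℕ) = (j:ℕ)+1 ∨ ((j:ℕ) = n-1 ∧ (i:ℕ) = 0)) then -1 else 0 := by
  simp only [Tmat, of_apply]
  rw [if_congr (fin_add_one_iff n hn i j) rfl rfl, if_congr (fin_add_one_iff n hn j i) rfl rfl]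

lemma Tmat_shift (k : Fin n) :
    (Tmat n).submatrix (Equiv.addRight k) (Equiv.addRight k) = Tmat n := by
  ext i j
  simp only [submatrix_apply, Equiv.coe_addRight, Tmat, of_apply]
  have h1 : (j + k = i + k + 1) ↔ (j = i + 1) := by
    rw [add_right_comm, add_left_inj]
  have h2 : (i + k = j + k + 1) ↔ (i = j + 1) := by
    rw [add_right_comm, add_left_inj]
  rw [if_congr h1 rfl rfl, if_congr h2 rfl rfl]

lemma adj_Tmat_diag (k : Fin n) :
    adjugate (Tmat n) k k = adjugate (Tmat n) 0 0 := by
  have h := adjugate_submatrix_equiv_self (Equiv.addRight k) (Tmat n)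
  rw [Tmat_shift n k] at h
  have h00 : adjugate (Tmat n) 0 0
      = ((adjugate (Tmat n)).submatrix (Equiv.addRight k) (Equiv.addRight k)) 0 0 := by
    rw [← h]
  rw [h00, submatrix_apply]
  simp

end

lemma Tmat_submatrix_succ (m : ℕ) (hm : 2 ≤ m) :
    (Tmat (m+1)).submatrix Fin.succ Fin.succ = Tri m := by
  ext i j
  have hi := i.isLt
  have hj := j.isLt
  simp only [submatrix_apply, Tmat, Tri, of_apply]
  have h1 : (Fin.succ j = Fin.succ i + 1) ↔ ((j:ℕ) = (i:ℕ)+1) := by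
    rw [Fin.ext_iff, Fin.val_add, Fin.val_succ, Fin.val_succ, Fin.val_one']
    rw [show (1 % (m+1)) = 1 from Nat.mod_eq_of_lt (by omega)]
    by_cases h : (i:ℕ) + 2 = m + 1
    · rw [show (i:ℕ) + 1 + 1 = m + 1 from by omega, Nat.mod_self]; omega
    · rw [Nat.mod_eq_of_lt (by omega)]; omega
  have h2 : (Fin.succ i = Fin.succ j + 1) ↔ ((i:ℕ) = (j:ℕ)+1) := by
    rw [Fin.ext_iff, Fin.val_add, Fin.val_succ, Fin.val_succ, Fin.val_one']
    rw [show (1 % (m+1)) = 1 from Nat.mod_eq_of_lt (by omega)]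
    by_cases h : (j:ℕ) + 2 = m + 1
    · rw [show (j:ℕ) + 1 + 1 = m + 1 from by omega, Nat.mod_self]; omega
    · rw [Nat.mod_eq_of_lt (by omega)]; omega
  rw [if_congr h1 rfl rfl, if_congr h2 rfl rfl]

lemma adj_Tmat_00 (m : ℕ) (hm : 2 ≤ m) :
    adjugate (Tmat (m+1)) 0 0 = (Tri m).det := by
  rw [adjugate_apply, det_succ_row_zero]
  rw [Finset.sum_eq_single (0 : Fin (m+1))]
  · rw [updateRow_self]
    have hsub : ((Tmat (m+1)).updateRow 0 (Pi.single 0 1)).submatrix Fin.succ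
        (Fin.succAbove 0) = Tri m := by
      rw [Fin.succAbove_zero, ← Tmat_submatrix_succ m hm]
      ext i j
      rw [submatrix_apply, submatrix_apply, updateRow_ne (Fin.succ_ne_zero i)]
    rw [hsub]
    simp
  · intro j _ hj
    rw [updateRow_self, Pi.single_eq_of_ne hj]
    ring
  · simp

lemma Amat_eq_mul (a : ℕ → ℝ) (n : ℕ) [NeZero n] (hn : 3 ≤ n) :
    Amat a n = Tmat n * Matrix.diagonal (fun k : Fin n => a (k:ℕ)) := by
  ext i j
  have hi := i.isLt
  have hj := j.isLt
  rw [mul_diagonal, Tmat_apply_nat n hn]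
  simp only [Amat, of_apply]
  by_cases c1 : (j:ℕ) = (i:ℕ)+1
  · rw [if_pos c1, if_pos (Or.inl c1), c1]; ring
  · by_cases c2 : (i:ℕ) = (j:ℕ)+1
    · have hno : ¬ ((j:ℕ) = (i:ℕ)+1 ∨ ((i:ℕ) = n-1 ∧ (j:ℕ) = 0)) := by omega
      rw [if_neg c1, if_pos c2, if_neg hno, if_pos (Or.inl c2)]; ring
    · by_cases c3 : (i:ℕ) = 0 ∧ (j:ℕ) = n-1
      · have hno : ¬ ((j:ℕ) = (i:ℕ)+1 ∨ ((i:ℕ) = n-1 ∧ (j:ℕ) = 0)) := by omega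
        rw [if_neg c1, if_neg c2, if_pos c3, if_neg hno,
          if_pos (Or.inr ⟨c3.2, c3.1⟩), c3.2]
        ring
      · by_cases c4 : (i:ℕ) = n-1 ∧ (j:ℕ) = 0
        · rw [if_neg c1, if_neg c2, if_neg c3, if_pos c4, if_pos (Or.inr c4), c4.2]; ring
        · have hno1 : ¬ ((j:ℕ) = (i:ℕ)+1 ∨ ((i:ℕ) = n-1 ∧ (j:ℕ) = 0)) := by
            push_neg
            exact ⟨c1, fun h1 h2 => c4 ⟨h1, h2⟩⟩
          have hno2 : ¬ ((i:ℕ) = (j:ℕ)+1 ∨ ((j:ℕ) = n-1 ∧ (i:ℕ) = 0)) := by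
            push_neg
            exact ⟨c2, fun h1 h2 => c3 ⟨h2, h1⟩⟩
          rw [if_neg c1, if_neg c2, if_neg c3, if_neg c4, if_neg hno1, if_neg hno2]
          ring

theorem deriv_charpoly_Amat_at_zero (a : ℕ → ℝ) (n : ℕ) (hn : Odd n) (hn3 : 3 ≤ n) :
    deriv (fun x : ℝ => (x • (1 : Matrix (Fin n) (Fin n) ℝ) - Amat a n).det) 0 =
      ∑ k ∈ Finset.range n, ∏ j ∈ (Finset.range n).erase k, a j := by
  classical
  haveI : NeZero n := ⟨by omega⟩
  rw [deriv_det_trace]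
  have hneg : (-(Amat a n)) = (-1 : ℝ) • Amat a n := by rw [neg_one_smul]
  have hpow : ((-1 : ℝ)) ^ (Fintype.card (Fin n) - 1) = 1 := by
    rw [Fintype.card_fin]
    obtain ⟨t, ht⟩ := hn
    exact Even.neg_one_pow ⟨t, by omega⟩
  rw [hneg, adjugate_smul, hpow, one_smul]
  rw [Amat_eq_mul a n hn3, adjugate_mul_distrib, adjugate_diagonal]
  have hdiag : ∀ k : Fin n, adjugate (Tmat n) k k = 1 := by
    intro k
    rw [adj_Tmat_diag n k]
    obtain ⟨t, ht⟩ := hn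
    have hn1 : n = (2*t) + 1 := by omega
    subst hn1
    rw [adj_Tmat_00 (2*t) (by omega), det_tri_even t]
  have htr : (Matrix.diagonal (fun i : Fin n => ∏ j ∈ Finset.univ.erase i,
        a ((j : Fin n) : ℕ)) * adjugate (Tmat n)).trace
      = ∑ k : Fin n, ∏ j ∈ Finset.univ.erase k, a ((j : Fin n) : ℕ) := by
    rw [Matrix.trace]
    refine Finset.sum_congr rfl fun k _ => ?_
    rw [Matrix.diag_apply, Matrix.diagonal_mul, hdiag k, mul_one]
  rw [htr]
  have hprod : ∀ k : Fin n, (∏ j ∈ Finset.univ.erase k, a ((j : Fin n) : ℕ))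
      = ∏ j ∈ (Finset.range n).erase (k:ℕ), a j := by
    intro k
    have himg : (Finset.range n).erase (k:ℕ) = (Finset.univ.erase k).image Fin.val := by
      ext x
      constructor
      · intro hx
        obtain ⟨hne, hlt⟩ : x ≠ (k:ℕ) ∧ x < n := by
          simpa [Finset.mem_erase, Finset.mem_range] using hx
        refine Finset.mem_image.mpr ⟨⟨x, hlt⟩, Finset.mem_erase.mpr ⟨?_, Finset.mem_univ _⟩, rfl⟩
        intro h
        exact hne (congrArg Fin.val h)
      · intro hx
        obtain ⟨j, hj, rfl⟩ := Finset.mem_image.mp hx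
        have hjk := (Finset.mem_erase.mp hj).1
        exact Finset.mem_erase.mpr ⟨fun h => hjk (Fin.ext h), Finset.mem_range.mpr j.isLt⟩
    rw [himg, Finset.prod_image (fun i _ j _ h => Fin.val_injective h)]
  calc ∑ k : Fin n, ∏ j ∈ Finset.univ.erase k, a ((j : Fin n) : ℕ)
      = ∑ k : Fin n, ∏ j ∈ (Finset.range n).erase (k:ℕ), a j :=
        Finset.sum_congr rfl fun k _ => hprod k
    _ = ∑ k ∈ Finset.range n, ∏ j ∈ (Finset.range n).erase k, a j :=
        Fin.sum_univ_eq_sum_range (fun kk => ∏ j ∈ (Finset.range n).erase kk, a j) n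
end

section
/- Suppose a_0 < 0, a_k > 0 for all k = 1, ..., n−1 (n odd, n ≥ 5), and a_0 + a_2 < 0. Then the characteristic polynomial of A' satisfies 𝒜(√(−a_1(a_0 + a_2))) < 0, and consequently A' has a real eigenvalue strictly greater than √(−a_1(a_0 + a_2)). -/
/-- `𝒜(x) = det (x I - A')`. -/
noncomputable def charA (a : ℕ → ℝ) (n : ℕ) (x : ℝ) : ℝ :=
  (x • (1 : Matrix (Fin n) (Fin n) ℝ) - Amat a n).det


open Matrix

noncomputable def DT (d u l : ℕ → ℝ) : ℕ → ℕ → ℝ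
  | _, 0 => 1
  | s, 1 => d s
  | s, (n+2) => d s * DT d u l (s+1) (n+1) - u s * l s * DT d u l (s+2) n

def tridEnt (d u l : ℕ → ℝ) (s i j : ℕ) : ℝ :=
  if i = j then d (s + i)
  else if j = i + 1 then u (s + i)
  else if i = j + 1 then l (s + j)
  else 0

def trid (d u l : ℕ → ℝ) (s n : ℕ) : Matrix (Fin n) (Fin n) ℝ :=
  Matrix.of fun i j => tridEnt d u l s i j

namespace tridEnt

variable (d u l : ℕ → ℝ) (s i j : ℕ)

lemma shift : tridEnt d u l s (i+1) (j+1) = tridEnt d u l (s+1) i j := by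
  simp only [tridEnt]; split_ifs <;> first | (congr 1; omega) | rfl | omega

lemma e00 : tridEnt d u l s 0 0 = d s := by simp [tridEnt]
lemma e01 : tridEnt d u l s 0 1 = u s := by simp [tridEnt]
lemma e10 : tridEnt d u l s 1 0 = l s := by simp [tridEnt]
lemma e0j : tridEnt d u l s 0 (j+2) = 0 := by
  simp only [tridEnt]; rw [if_neg (by omega), if_neg (by omega), if_neg (by omega)]
lemma ei0 : tridEnt d u l s (i+2) 0 = 0 := by
  simp only [tridEnt]; rw [if_neg (by omega), if_neg (by omega), if_neg (by omega)]

end tridEnt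

lemma succAbove_one_val {n : ℕ} (j : Fin (n+1)) :
    (((1 : Fin (n+1+1)).succAbove j : ℕ)) = if (j:ℕ) = 0 then 0 else (j:ℕ)+1 := by
  simp only [Fin.succAbove, Fin.lt_def, Fin.coe_castSucc, Fin.val_one]
  split_ifs <;> simp [Fin.val_succ] <;> (try exact Fin.ext ‹_›) <;> omega

lemma trid_apply (d u l : ℕ → ℝ) (s n : ℕ) (i j : Fin n) :
    trid d u l s n i j = tridEnt d u l s i j := rfl

theorem det_trid (d u l : ℕ → ℝ) : ∀ n s, (trid d u l s n).det = DT d u l s n := by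
  intro n
  induction n using Nat.strong_induction_on with
  | _ n ih =>
    match n with
    | 0 => intro s; simp [DT, Matrix.det_fin_zero]
    | 1 => intro s; simp [DT, Matrix.det_fin_one, trid, tridEnt]
    | (n+2) =>
      intro s
      rw [Matrix.det_succ_row_zero, Fin.sum_univ_succ, Fin.sum_univ_succ]
      have h0 : (trid d u l s (n+2)) 0 0 = d s := tridEnt.e00 d u l s
      have h1 : (trid d u l s (n+2)) 0 (Fin.succ 0) = u s := by
        rw [trid_apply]
        have : ((Fin.succ (0 : Fin (n+1)) : Fin (n+2)) : ℕ) = 1 := by simp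
        rw [this, Fin.val_zero, tridEnt.e01]
      have h2 : ∀ j : Fin n, (trid d u l s (n+2)) 0 j.succ.succ = 0 := by
        intro j; rw [trid_apply]
        have : ((j.succ.succ : Fin (n+2)) : ℕ) = (j : ℕ) + 2 := by simp
        rw [this, Fin.val_zero, tridEnt.e0j]
      have hm0 : (trid d u l s (n+2)).submatrix Fin.succ ((0 : Fin (n+1+1)).succAbove)
          = trid d u l (s+1) (n+1) := by
        rw [Fin.succAbove_zero]
        ext i j
        rw [Matrix.submatrix_apply, trid_apply, trid_apply, Fin.val_succ, Fin.val_succ,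
          tridEnt.shift]
      have key1 : ((trid d u l s (n+2)).submatrix Fin.succ ((1 : Fin (n+1+1)).succAbove)).det
          = l s * DT d u l (s+2) n := by
        set B := (trid d u l s (n+2)).submatrix Fin.succ ((1 : Fin (n+1+1)).succAbove) with hB
        rw [Matrix.det_succ_column_zero, Fin.sum_univ_succ]
        have hB00 : B 0 0 = l s := by
          rw [hB, Matrix.submatrix_apply, trid_apply]
          have h1 : ((Fin.succ (0 : Fin (n+1)) : Fin (n+2)) : ℕ) = 1 := by simp
          have h2 : (((1 : Fin (n+1+1)).succAbove 0 : ℕ)) = 0 := by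
            rw [succAbove_one_val]; simp
          rw [h1, h2, tridEnt.e10]
        have hBs0 : ∀ i : Fin n, B i.succ 0 = 0 := by
          intro i
          rw [hB, Matrix.submatrix_apply, trid_apply]
          have h1 : ((Fin.succ (Fin.succ i) : Fin (n+2)) : ℕ) = (i : ℕ) + 2 := by simp
          have h2 : (((1 : Fin (n+1+1)).succAbove 0 : ℕ)) = 0 := by
            rw [succAbove_one_val]; simp
          rw [h1, h2, tridEnt.ei0]
        have hminor : B.submatrix ((0 : Fin (n+1)).succAbove) Fin.succ
            = trid d u l (s+2) n := by
          rw [Fin.succAbove_zero]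
          ext i j
          rw [Matrix.submatrix_apply, hB, Matrix.submatrix_apply, trid_apply, trid_apply]
          have h1 : ((Fin.succ (Fin.succ i) : Fin (n+2)) : ℕ) = (i : ℕ) + 2 := by simp
          have h2 : (((1 : Fin (n+1+1)).succAbove j.succ : ℕ)) = (j : ℕ) + 2 := by
            rw [succAbove_one_val]; simp
          rw [h1, h2, show ((i:ℕ)+2) = (i+1)+1 from rfl, show ((j:ℕ)+2) = (j+1)+1 from rfl,
            tridEnt.shift, tridEnt.shift]
        rw [hB00, hminor, ih n (by omega) (s+2)]
        simp only [hBs0, mul_zero, zero_mul, Finset.sum_const_zero, add_zero]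
        simp
      simp only [Fin.succ_zero_eq_one] at *
      rw [h0, h1, hm0, key1]
      have hrest : ∀ j : Fin n, ((-1:ℝ))^((j.succ.succ : Fin (n+2)) : ℕ) *
          (trid d u l s (n+2)) 0 j.succ.succ *
          ((trid d u l s (n+2)).submatrix Fin.succ (j.succ.succ).succAbove).det = 0 := by
        intro j; rw [h2]; ring
      rw [Finset.sum_congr rfl (fun j _ => hrest j), Finset.sum_const_zero]
      rw [ih (n+1) (by omega) (s+1)]
      simp [DT]
      ring

section Decomp

variable (a : ℕ → ℝ) (x : ℝ) (m : ℕ)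

noncomputable abbrev dd : ℕ → ℝ := fun _ => x
noncomputable abbrev uu : ℕ → ℝ := fun k => -(a (k+1))
noncomputable abbrev ll : ℕ → ℝ := fun k => a k



lemma hM_decomp :
    x • (1 : Matrix (Fin (m+5)) (Fin (m+5)) ℝ) - Amat a (m+5)
      = updateRow (updateRow (trid (dd x) (uu a) (ll a) 0 (m+5)) (Fin.last (m+4))
            ((trid (dd x) (uu a) (ll a) 0 (m+5)) (Fin.last (m+4)) + Pi.single 0 (-(a 0))))
          0 ((trid (dd x) (uu a) (ll a) 0 (m+5)) 0 + Pi.single (Fin.last (m+4)) (a (m+4))) := by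
  have hne : (0 : Fin (m+5)) ≠ Fin.last (m+4) := by simp [Fin.ext_iff]
  ext i j
  have hi := i.isLt
  have hj := j.isLt
  have hent : ∀ i' j' : Fin (m+5), trid (dd x) (uu a) (ll a) 0 (m+5) i' j'
      = tridEnt (dd x) (uu a) (ll a) 0 i' j' := fun _ _ => rfl
  rcases eq_or_ne i 0 with rfl | hi0'
  · rw [updateRow_self]
    simp only [Matrix.sub_apply, Matrix.smul_apply, Matrix.one_apply, smul_eq_mul,
      Amat, Matrix.of_apply, Pi.add_apply, hent, tridEnt, dd, uu, ll, Pi.single_apply,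
      Fin.ext_iff, show ((0 : Fin (m+5)) : ℕ) = 0 from rfl, show ((Fin.last (m+4) : Fin (m+5)) : ℕ) = m + 4 from rfl, zero_add,
      show m+5-1 = m+4 from rfl]
    split_ifs <;> first | ring1 | (exfalso; first | assumption | omega | exact (‹False ∧ _›).1 | simp_all) | (congr 1; omega)
  · rw [updateRow_ne hi0']
    rcases eq_or_ne i (Fin.last (m+4)) with rfl | hiN'
    · rw [updateRow_self]
      simp only [Matrix.sub_apply, Matrix.smul_apply, Matrix.one_apply, smul_eq_mul,
        Amat, Matrix.of_apply, Pi.add_apply, hent, tridEnt, dd, uu, ll, Pi.single_apply,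
        Fin.ext_iff, show ((0 : Fin (m+5)) : ℕ) = 0 from rfl, show ((Fin.last (m+4) : Fin (m+5)) : ℕ) = m + 4 from rfl, zero_add,
        show m+5-1 = m+4 from rfl]
      split_ifs <;> first | ring1 | (exfalso; first | assumption | omega | exact (‹False ∧ _›).1 | simp_all) | (congr 1; omega)
    · rw [updateRow_ne hiN']
      have h1 : (i : ℕ) ≠ 0 := fun h => hi0' (by simp [Fin.ext_iff, h])
      have h2 : (i : ℕ) ≠ m + 4 := fun h => hiN' (by simp [Fin.ext_iff, h])
      simp only [Matrix.sub_apply, Matrix.smul_apply, Matrix.one_apply, smul_eq_mul,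
        Amat, Matrix.of_apply, hent, tridEnt, dd, uu, ll, Fin.ext_iff, zero_add,
        show m+5-1 = m+4 from rfl]
      split_ifs <;> first | ring1 | (exfalso; first | assumption | omega | exact (‹False ∧ _›).1 | simp_all) | (congr 1; omega)

lemma detB :
    (updateRow (trid (dd x) (uu a) (ll a) 0 (m+5)) 0
        (Pi.single (Fin.last (m+4)) (a (m+4)))).det
      = (-1)^(m+4) * a (m+4) * ∏ i : Fin (m+4), a i := by
  set T := trid (dd x) (uu a) (ll a) 0 (m+5) with hT
  set B := updateRow T 0 (Pi.single (Fin.last (m+4)) (a (m+4))) with hB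
  rw [show B.det = ∑ j : Fin (m+4+1), (-1)^(j:ℕ) * B 0 j *
      (B.submatrix Fin.succ j.succAbove).det from Matrix.det_succ_row_zero B]
  rw [Finset.sum_eq_single (Fin.last (m+4))]
  · rw [show B 0 (Fin.last (m+4)) = a (m+4) by
      rw [hB, updateRow_self, Pi.single_eq_same]]
    rw [Fin.succAbove_last, Fin.val_last]
    have hminor : B.submatrix Fin.succ Fin.castSucc =
        Matrix.of (fun i j : Fin (m+4) => tridEnt (dd x) (uu a) (ll a) 0 ((i:ℕ)+1) (j:ℕ)) := by
      ext i j
      rw [Matrix.submatrix_apply, hB, updateRow_ne (Fin.succ_ne_zero i)]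
      rfl
    rw [hminor]
    rw [Matrix.det_of_upperTriangular]
    · rw [show (∏ i : Fin (m+4), Matrix.of
          (fun i j : Fin (m+4) => tridEnt (dd x) (uu a) (ll a) 0 ((i:ℕ)+1) (j:ℕ)) i i)
          = ∏ i : Fin (m+4), a (i:ℕ) from Finset.prod_congr rfl (fun i _ => by
            simp only [Matrix.of_apply, tridEnt, ll, zero_add]
            rw [if_neg (by omega), if_neg (by omega)]
            simp)]
    · intro i j hij
      simp only [Matrix.of_apply, tridEnt, id] at *
      rw [if_neg (by omega), if_neg (by omega), if_neg (by omega)]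
  · intro b _ hbne
    rw [show B 0 b = 0 by rw [hB, updateRow_self, Pi.single_eq_of_ne hbne]]
    ring
  · intro h; exact absurd (Finset.mem_univ _) h

lemma detC :
    (updateRow (trid (dd x) (uu a) (ll a) 0 (m+5)) (Fin.last (m+4))
        (Pi.single 0 (-(a 0)))).det
      = (-1)^(m+4) * (-(a 0)) * ∏ i : Fin (m+4), (-(a ((i:ℕ)+1))) := by
  set T := trid (dd x) (uu a) (ll a) 0 (m+5) with hT
  set C := updateRow T (Fin.last (m+4)) (Pi.single 0 (-(a 0))) with hC
  rw [show C.det = ∑ j : Fin (m+4+1), (-1)^(((Fin.last (m+4) : Fin (m+4+1)):ℕ)+(j:ℕ)) * C (Fin.last (m+4)) j *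
      (C.submatrix (Fin.last (m+4)).succAbove j.succAbove).det from
      Matrix.det_succ_row C (Fin.last (m+4))]
  rw [Finset.sum_eq_single 0]
  · rw [show C (Fin.last (m+4)) 0 = -(a 0) by
      rw [hC, updateRow_self, Pi.single_eq_same]]
    rw [Fin.succAbove_last, Fin.succAbove_zero]
    simp only [Fin.val_last, Fin.val_zero, Nat.add_zero]
    have hminor : C.submatrix Fin.castSucc Fin.succ =
        Matrix.of (fun i j : Fin (m+4) => tridEnt (dd x) (uu a) (ll a) 0 (i:ℕ) ((j:ℕ)+1)) := by
      ext i j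
      rw [Matrix.submatrix_apply, hC, updateRow_ne (Fin.ne_of_lt (Fin.castSucc_lt_last i))]
      rfl
    rw [hminor]
    rw [Matrix.det_of_lowerTriangular]
    · rw [show (∏ i : Fin (m+4), Matrix.of
          (fun i j : Fin (m+4) => tridEnt (dd x) (uu a) (ll a) 0 (i:ℕ) ((j:ℕ)+1)) i i)
          = ∏ i : Fin (m+4), (-(a ((i:ℕ)+1))) from Finset.prod_congr rfl (fun i _ => by
            simp only [Matrix.of_apply, tridEnt, uu, zero_add]
            rw [if_neg (by omega)]
            simp)]
    · intro i j hij
      have hij' : (i:ℕ) < (j:ℕ) := hij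
      simp only [Matrix.of_apply, tridEnt]
      rw [if_neg (by omega), if_neg (by omega), if_neg (by omega)]
  · intro b _ hbne
    rw [show C (Fin.last (m+4)) b = 0 by rw [hC, updateRow_self, Pi.single_eq_of_ne hbne]]
    ring
  · intro h; exact absurd (Finset.mem_univ _) h

lemma detD :
    (updateRow (updateRow (trid (dd x) (uu a) (ll a) 0 (m+5)) 0
        (Pi.single (Fin.last (m+4)) (a (m+4)))) (Fin.last (m+4))
        (Pi.single 0 (-(a 0)))).det
      = (-1)^(m+4) * a (m+4) * ((-1)^(m+3) * (-(a 0)) *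
          DT (dd x) (uu a) (ll a) 1 (m+3)) := by
  set T := trid (dd x) (uu a) (ll a) 0 (m+5) with hT
  set D := updateRow (updateRow T 0 (Pi.single (Fin.last (m+4)) (a (m+4))))
      (Fin.last (m+4)) (Pi.single 0 (-(a 0))) with hD
  have hrow0 : D 0 = Pi.single (Fin.last (m+4)) (a (m+4)) := by
    rw [hD, updateRow_ne (by simp [Fin.ext_iff] : (0 : Fin (m+5)) ≠ Fin.last (m+4)),
      updateRow_self]
  rw [show D.det = ∑ j : Fin (m+4+1), (-1)^(j:ℕ) * D 0 j *
      (D.submatrix Fin.succ j.succAbove).det from Matrix.det_succ_row_zero D]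
  rw [Finset.sum_eq_single (Fin.last (m+4))]
  · rw [show D 0 (Fin.last (m+4)) = a (m+4) by rw [hrow0, Pi.single_eq_same]]
    rw [Fin.succAbove_last, Fin.val_last]
    set M1 := D.submatrix Fin.succ Fin.castSucc with hM1
    have hlastrow : M1 (Fin.last (m+3)) = (Pi.single (0 : Fin (m+4)) (-(a 0)) : Fin (m+4) → ℝ) := by
      funext j
      rw [hM1, Matrix.submatrix_apply,
        show Fin.succ (Fin.last (m+3)) = Fin.last (m+4) from by
          apply Fin.ext; simp,
        hD, updateRow_self]
      rcases eq_or_ne j 0 with rfl | hj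
      · rw [show Fin.castSucc (0 : Fin (m+4)) = (0 : Fin (m+5)) from by
            apply Fin.ext; simp,
          Pi.single_eq_same, Pi.single_eq_same]
      · rw [Pi.single_eq_of_ne (by
            intro h; exact hj (by
              apply Fin.ext
              have := congrArg Fin.val h
              simpa using this)),
          Pi.single_eq_of_ne hj]
    rw [show M1.det = ∑ j : Fin (m+3+1), (-1)^(((Fin.last (m+3) : Fin (m+3+1)):ℕ)+(j:ℕ)) * M1 (Fin.last (m+3)) j *
        (M1.submatrix (Fin.last (m+3)).succAbove j.succAbove).det from
        Matrix.det_succ_row M1 (Fin.last (m+3))]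
    rw [Finset.sum_eq_single 0]
    · rw [show M1 (Fin.last (m+3)) 0 = -(a 0) by rw [hlastrow]; exact Pi.single_eq_same _ _]
      rw [Fin.succAbove_last, Fin.succAbove_zero]
      simp only [Fin.val_last, Fin.val_zero, Nat.add_zero]
      have hminor2 : M1.submatrix Fin.castSucc Fin.succ = trid (dd x) (uu a) (ll a) 1 (m+3) := by
        ext i j
        rw [Matrix.submatrix_apply, hM1, Matrix.submatrix_apply, hD]
        rw [updateRow_ne (by
          intro h
          have := congrArg Fin.val h
          simp at this
          omega)]
        rw [updateRow_ne (Fin.succ_ne_zero _)]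
        show tridEnt (dd x) (uu a) (ll a) 0 ((Fin.succ (Fin.castSucc i) : Fin (m+5)):ℕ)
            ((Fin.castSucc (Fin.succ j) : Fin (m+5)):ℕ) = _
        rw [show ((Fin.succ (Fin.castSucc i) : Fin (m+5)):ℕ) = (i:ℕ)+1 from by simp,
          show ((Fin.castSucc (Fin.succ j) : Fin (m+5)):ℕ) = (j:ℕ)+1 from by simp,
          tridEnt.shift]
        rfl
      rw [hminor2, det_trid]
    · intro b _ hbne
      rw [show M1 (Fin.last (m+3)) b = 0 by rw [hlastrow]; exact Pi.single_eq_of_ne hbne _]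
      ring
    · intro h; exact absurd (Finset.mem_univ _) h
  · intro b _ hbne
    rw [show D 0 b = 0 by rw [hrow0]; exact Pi.single_eq_of_ne hbne _]
    ring
  · intro h; exact absurd (Finset.mem_univ _) h


lemma decompose (hm : Even m) :
    (x • (1 : Matrix (Fin (m+5)) (Fin (m+5)) ℝ) - Amat a (m+5)).det
      = DT (dd x) (uu a) (ll a) 0 (m+5) + a 0 * a (m+4) * DT (dd x) (uu a) (ll a) 1 (m+3) := by
  have h0N : (0 : Fin (m+5)) ≠ Fin.last (m+4) := by simp [Fin.ext_iff]
  rw [hM_decomp a x m]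
  set T := trid (dd x) (uu a) (ll a) 0 (m+5) with hT
  set rN := T (Fin.last (m+4)) + Pi.single 0 (-(a 0)) with hrN
  set U := updateRow T (Fin.last (m+4)) rN with hU
  rw [Matrix.det_updateRow_add]
  have hU0 : T 0 = U 0 := (updateRow_ne h0N).symm
  rw [show updateRow U 0 (T 0) = U by rw [hU0]; exact updateRow_eq_self U 0]
  have hUsplit : U.det = T.det +
      (updateRow T (Fin.last (m+4)) (Pi.single 0 (-(a 0)))).det := by
    rw [hU, hrN, Matrix.det_updateRow_add, updateRow_eq_self]
  have hcomm : updateRow U 0 (Pi.single (Fin.last (m+4)) (a (m+4)))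
      = updateRow (updateRow T 0 (Pi.single (Fin.last (m+4)) (a (m+4)))) (Fin.last (m+4)) rN := by
    ext i j
    rcases eq_or_ne i 0 with rfl | hi0
    · rw [updateRow_self, updateRow_ne h0N, updateRow_self]
    · rw [updateRow_ne hi0]
      rcases eq_or_ne i (Fin.last (m+4)) with rfl | hiN
      · rw [hU, updateRow_self, updateRow_self]
      · rw [hU, updateRow_ne hiN, updateRow_ne hiN, updateRow_ne hi0]
  have hBsplit : (updateRow U 0 (Pi.single (Fin.last (m+4)) (a (m+4)))).det
      = (updateRow T 0 (Pi.single (Fin.last (m+4)) (a (m+4)))).det +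
        (updateRow (updateRow T 0 (Pi.single (Fin.last (m+4)) (a (m+4)))) (Fin.last (m+4))
          (Pi.single 0 (-(a 0)))).det := by
    rw [hcomm, hrN]
    rw [show T (Fin.last (m+4))
        = (updateRow T 0 (Pi.single (Fin.last (m+4)) (a (m+4)))) (Fin.last (m+4)) from
        (updateRow_ne (Ne.symm h0N)).symm]
    rw [Matrix.det_updateRow_add, updateRow_eq_self]
  rw [hUsplit, hBsplit, hT, det_trid, detB a x m, detC a x m, detD a x m]
  have hev4 : Even (m+4) := by rcases hm with ⟨t, ht⟩; exact ⟨t+2, by omega⟩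
  have hod3 : Odd (m+3) := by rcases hm with ⟨t, ht⟩; exact ⟨t+1, by omega⟩
  rw [hev4.neg_one_pow, hod3.neg_one_pow]
  have h1 : (∏ i : Fin (m+4), (-(a ((i:ℕ)+1)))) = ∏ i : Fin (m+4), a ((i:ℕ)+1) := by
    calc (∏ i : Fin (m+4), (-(a ((i:ℕ)+1))))
        = ∏ i : Fin (m+4), ((-1) * a ((i:ℕ)+1)) := by
          exact Finset.prod_congr rfl (fun i _ => by ring)
      _ = ((-1:ℝ) ^ (m+4)) * ∏ i : Fin (m+4), a ((i:ℕ)+1) := by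
          rw [Finset.prod_mul_distrib, Finset.prod_const, Finset.card_univ, Fintype.card_fin]
      _ = ∏ i : Fin (m+4), a ((i:ℕ)+1) := by rw [hev4.neg_one_pow, one_mul]
  have e1 : (∏ i : Fin (m+5), a (i:ℕ)) = (∏ i : Fin (m+4), a (i:ℕ)) * a (m+4) := by
    rw [Fin.prod_univ_castSucc]
    simp [Fin.coe_castSucc, Fin.val_last]
  have e2 : (∏ i : Fin (m+5), a (i:ℕ)) = a 0 * ∏ i : Fin (m+4), a ((i:ℕ)+1) := by
    rw [Fin.prod_univ_succ]
    simp [Fin.val_succ, Fin.val_zero]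
  have h2 : a (m+4) * ∏ i : Fin (m+4), a (i:ℕ) = a 0 * ∏ i : Fin (m+4), a ((i:ℕ)+1) := by
    rw [mul_comm, ← e1, e2]
  rw [h1]
  linear_combination h2

lemma DT_step (d' u' l' : ℕ → ℝ) (s n : ℕ) :
    DT d' u' l' s (n+2) = d' s * DT d' u' l' (s+1) (n+1) - u' s * l' s * DT d' u' l' (s+2) n := by
  simp [DT]

lemma DT_pos (hx : 0 < x) : ∀ j s, (∀ k, s ≤ k → k < s + j → 0 < a k) →
    0 < DT (dd x) (uu a) (ll a) s j := by
  intro j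
  induction j using Nat.strong_induction_on with
  | _ j ih =>
    match j with
    | 0 => intro s _; simp [DT]
    | 1 => intro s _; simpa [DT, dd] using hx
    | (j+2) =>
      intro s h
      have h1 : 0 < DT (dd x) (uu a) (ll a) (s+1) (j+1) :=
        ih (j+1) (by omega) (s+1) (fun k hk1 hk2 => h k (by omega) (by omega))
      have h2 : 0 < DT (dd x) (uu a) (ll a) (s+2) j :=
        ih j (by omega) (s+2) (fun k hk1 hk2 => h k (by omega) (by omega))
      have ha1 : 0 < a s := h s le_rfl (by omega)
      have ha2 : 0 < a (s+1) := h (s+1) (by omega) (by omega)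
      rw [show (j+2) = j+2 from rfl, DT_step]
      simp only [dd, uu, ll]
      nlinarith [mul_pos hx h1, mul_pos (mul_pos ha1 ha2) h2]

lemma DT_at_x0 (hx2 : x^2 = -(a 1 * (a 0 + a 2))) :
    DT (dd x) (uu a) (ll a) 0 (m+5)
      = -(a 1 * a 2^2 * a 3) * DT (dd x) (uu a) (ll a) 4 (m+1) := by
  have e0 : DT (dd x) (uu a) (ll a) 0 (m+5)
      = x * DT (dd x) (uu a) (ll a) 1 (m+4)
        - (-(a 1)) * a 0 * DT (dd x) (uu a) (ll a) 2 (m+3) := DT_step (dd x) (uu a) (ll a) 0 (m+3)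
  have e1 : DT (dd x) (uu a) (ll a) 1 (m+4)
      = x * DT (dd x) (uu a) (ll a) 2 (m+3)
        - (-(a 2)) * a 1 * DT (dd x) (uu a) (ll a) 3 (m+2) := DT_step (dd x) (uu a) (ll a) 1 (m+2)
  have e2 : DT (dd x) (uu a) (ll a) 2 (m+3)
      = x * DT (dd x) (uu a) (ll a) 3 (m+2)
        - (-(a 3)) * a 2 * DT (dd x) (uu a) (ll a) 4 (m+1) := DT_step (dd x) (uu a) (ll a) 2 (m+1)
  rw [e0, e1, e2]
  linear_combination (x * DT (dd x) (uu a) (ll a) 3 (m+2)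
    + a 2 * a 3 * DT (dd x) (uu a) (ll a) 4 (m+1)) * hx2

end Decomp

lemma charA_eq_eval (b : ℕ → ℝ) (n : ℕ) (x : ℝ) :
    charA b n x = ((Amat b n).charpoly).eval x := by
  unfold charA Matrix.charpoly
  rw [show Polynomial.eval x (Matrix.charmatrix (Amat b n)).det
      = Polynomial.evalRingHom x (Matrix.charmatrix (Amat b n)).det from rfl,
    RingHom.map_det]
  congr 1
  ext i j
  rcases eq_or_ne i j with rfl | hij
  · simp [Matrix.charmatrix_apply_eq, Matrix.one_apply]
  · simp [Matrix.charmatrix_apply_ne _ _ _ hij, Matrix.one_apply, hij]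

theorem charA_neg_and_real_eigenvalue (a : ℕ → ℝ) (n : ℕ)
    (hodd : Odd n) (hn5 : 5 ≤ n)
    (h0 : a 0 < 0) (hk : ∀ k, 1 ≤ k → k ≤ n - 1 → 0 < a k)
    (h02 : a 0 + a 2 < 0) :
    charA a n (Real.sqrt (-(a 1 * (a 0 + a 2)))) < 0 ∧
    ∃ lam : ℝ, Real.sqrt (-(a 1 * (a 0 + a 2))) < lam ∧ charA a n lam = 0 := by
  obtain ⟨m, rfl⟩ : ∃ m, n = m + 5 := ⟨n - 5, by omega⟩
  have hm : Even m := by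
    rcases hodd with ⟨t, ht⟩; exact ⟨t-2, by omega⟩
  set x0 := Real.sqrt (-(a 1 * (a 0 + a 2))) with hx0
  have ha1 : 0 < a 1 := hk 1 (by omega) (by omega)
  have ha2 : 0 < a 2 := hk 2 (by omega) (by omega)
  have ha3 : 0 < a 3 := hk 3 (by omega) (by omega)
  have haN : 0 < a (m+4) := hk (m+4) (by omega) (by omega)
  have hpos : 0 < -(a 1 * (a 0 + a 2)) := by nlinarith
  have hx0pos : 0 < x0 := Real.sqrt_pos.2 hpos
  have hx0sq : x0^2 = -(a 1 * (a 0 + a 2)) := Real.sq_sqrt hpos.le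
  have hDT4 : 0 < DT (dd x0) (uu a) (ll a) 4 (m+1) :=
    DT_pos a x0 hx0pos (m+1) 4 (fun k h1 h2 => hk k (by omega) (by omega))
  have hDT1 : 0 < DT (dd x0) (uu a) (ll a) 1 (m+3) :=
    DT_pos a x0 hx0pos (m+3) 1 (fun k h1 h2 => hk k (by omega) (by omega))
  have hval : charA a (m+5) x0
      = -(a 1 * a 2^2 * a 3) * DT (dd x0) (uu a) (ll a) 4 (m+1)
        + a 0 * a (m+4) * DT (dd x0) (uu a) (ll a) 1 (m+3) := by
    show (x0 • (1 : Matrix (Fin (m+5)) (Fin (m+5)) ℝ) - Amat a (m+5)).det = _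
    rw [decompose a x0 m hm, DT_at_x0 a x0 m hx0sq]
  have hneg : charA a (m+5) x0 < 0 := by
    rw [hval]
    nlinarith [mul_pos (mul_pos (mul_pos ha1 (mul_pos ha2 ha2)) ha3) hDT4,
      mul_pos haN hDT1, mul_pos (mul_pos haN hDT1) (neg_pos.2 h0)]
  refine ⟨hneg, ?_⟩
  have hcp : ∀ y, charA a (m+5) y = ((Amat a (m+5)).charpoly).eval y :=
    fun y => charA_eq_eval a (m+5) y
  set p := (Amat a (m+5)).charpoly with hp
  have hmono : p.Monic := Matrix.charpoly_monic _
  have hdeg : 0 < p.degree := by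
    rw [hp, Matrix.charpoly_degree_eq_dim]
    simp only [Fintype.card_fin]
    exact_mod_cast Nat.pos_of_ne_zero (by omega)
  have htend : Filter.Tendsto (fun y => p.eval y) Filter.atTop Filter.atTop :=
    p.tendsto_atTop_of_leadingCoeff_nonneg hdeg (by rw [hmono.leadingCoeff]; norm_num)
  obtain ⟨y, hy1, hy2⟩ :=
    ((htend.eventually_ge_atTop 1).and (Filter.eventually_ge_atTop (x0+1))).exists
  have hx0y : x0 ≤ y := by linarith
  have hcont : ContinuousOn (fun y => p.eval y) (Set.Icc x0 y) :=
    (Polynomial.continuous p).continuousOn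
  have hmem : (0:ℝ) ∈ Set.Icc (p.eval x0) (p.eval y) := by
    constructor
    · have := hneg; rw [hcp x0] at this; exact this.le
    · linarith
  obtain ⟨c, hc1, hc2⟩ := intermediate_value_Icc hx0y hcont hmem
  refine ⟨c, ?_, by rw [hcp c]; exact hc2⟩
  rcases eq_or_lt_of_le hc1.1 with rfl | h
  · exfalso
    rw [hcp x0] at hneg
    simp only at hc2
    rw [hc2] at hneg
    exact lt_irrefl 0 hneg
  · exact h
end

section
/- If |a| < (√3 − 1)|p| for vectors a, p ∈ ℝ² with p ≠ 0, then (1/|p|² − 1/|a|²) + (1/|p|² − 1/|a + 2p|²) < 0 and (1/|p|² − 1/|a|²) + (1/|p|² − 1/|a − 2p|²) < 0 (assuming a ≠ 0 and a ± 2p ≠ 0). -/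
/-- Euclidean norm on `ℝ²` (as pairs). -/
noncomputable def enormR (v : ℝ × ℝ) : ℝ :=
  Real.sqrt (v.1 ^ 2 + v.2 ^ 2)

lemma enormR_pos {v : ℝ × ℝ} (hv : v ≠ 0) : 0 < enormR v := by
  have h : 0 < v.1 ^ 2 + v.2 ^ 2 := by
    have : v.1 ≠ 0 ∨ v.2 ≠ 0 := by
      by_contra hc
      push_neg at hc
      exact hv (Prod.ext hc.1 hc.2)
    rcases this with h1 | h2
    · positivity
    · positivity
  exact Real.sqrt_pos.mpr h

lemma enormR_sq (v : ℝ × ℝ) : (enormR v) ^ 2 = v.1 ^ 2 + v.2 ^ 2 :=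
  Real.sq_sqrt (by positivity)

lemma key (x q : ℝ) (hx : 0 < x) (hq : 0 < q) (h : x < (Real.sqrt 3 - 1) * q) :
    2 / q ^ 2 < 1 / x ^ 2 + 1 / (x + 2 * q) ^ 2 := by
  set s := Real.sqrt 3 with hsdef
  have hs : s ^ 2 = 3 := Real.sq_sqrt (by norm_num)
  have hs0 : 0 ≤ s := Real.sqrt_nonneg 3
  have hs1 : 1 < s := by nlinarith
  have hs2 : s < 2 := by nlinarith
  have htpos : 0 < (s - 1) * q := mul_pos (by linarith) hq
  have hA : 1 / ((s - 1) * q) ^ 2 < 1 / x ^ 2 := by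
    apply one_div_lt_one_div_of_lt (by positivity)
    nlinarith
  have hB : 1 / ((s + 1) * q) ^ 2 ≤ 1 / (x + 2 * q) ^ 2 := by
    apply one_div_le_one_div_of_le (by positivity)
    nlinarith
  have hq2 : (q : ℝ) ^ 2 ≠ 0 := by positivity
  have hd1 : ((4 : ℝ) - 2 * s) * q ^ 2 ≠ 0 := by
    apply mul_ne_zero _ hq2; nlinarith
  have hd2 : ((4 : ℝ) + 2 * s) * q ^ 2 ≠ 0 := by
    apply mul_ne_zero _ hq2; nlinarith
  have e0 : ((s - 1) * q) ^ 2 = (4 - 2 * s) * q ^ 2 := by linear_combination q ^ 2 * hs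
  have e0' : ((s + 1) * q) ^ 2 = (4 + 2 * s) * q ^ 2 := by linear_combination q ^ 2 * hs
  have e1 : 1 / ((4 - 2 * s) * q ^ 2) = (4 + 2 * s) / (4 * q ^ 2) := by
    rw [div_eq_div_iff hd1 (by positivity)]
    linear_combination (4 * q ^ 2) * hs
  have e2 : 1 / ((4 + 2 * s) * q ^ 2) = (4 - 2 * s) / (4 * q ^ 2) := by
    rw [div_eq_div_iff hd2 (by positivity)]
    linear_combination (4 * q ^ 2) * hs
  have hsum : 1 / ((s - 1) * q) ^ 2 + 1 / ((s + 1) * q) ^ 2 = 2 / q ^ 2 := by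
    rw [e0, e0', e1, e2, ← add_div]
    field_simp
    ring
  linarith

theorem rho0_plus_rho2_neg (a p : ℝ × ℝ)
    (hp : p ≠ 0) (ha : a ≠ 0)
    (hap : a + (2 : ℝ) • p ≠ 0) (ham : a - (2 : ℝ) • p ≠ 0)
    (hsmall : enormR a < (Real.sqrt 3 - 1) * enormR p) :
    (1 / (enormR p) ^ 2 - 1 / (enormR a) ^ 2) +
      (1 / (enormR p) ^ 2 - 1 / (enormR (a + (2 : ℝ) • p)) ^ 2) < 0 ∧
    (1 / (enormR p) ^ 2 - 1 / (enormR a) ^ 2) +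
      (1 / (enormR p) ^ 2 - 1 / (enormR (a - (2 : ℝ) • p)) ^ 2) < 0 := by
  set x := enormR a with hxdef
  set q := enormR p with hqdef
  have hx : 0 < x := enormR_pos ha
  have hq : 0 < q := enormR_pos hp
  have hxsq : x ^ 2 = a.1 ^ 2 + a.2 ^ 2 := enormR_sq a
  have hqsq : q ^ 2 = p.1 ^ 2 + p.2 ^ 2 := enormR_sq p
  -- Cauchy–Schwarz: the dot product is at most x*q in absolute value
  have hcs : (a.1 * p.1 + a.2 * p.2) ^ 2 ≤ (x * q) ^ 2 := by
    have : (a.1 * p.1 + a.2 * p.2) ^ 2 ≤ (a.1 ^ 2 + a.2 ^ 2) * (p.1 ^ 2 + p.2 ^ 2) := by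
      nlinarith [sq_nonneg (a.1 * p.2 - a.2 * p.1)]
    calc (a.1 * p.1 + a.2 * p.2) ^ 2 ≤ (a.1 ^ 2 + a.2 ^ 2) * (p.1 ^ 2 + p.2 ^ 2) := this
      _ = (x * q) ^ 2 := by rw [mul_pow, hxsq, hqsq]
  have hxqpos : 0 < x * q := mul_pos hx hq
  have hd1 : a.1 * p.1 + a.2 * p.2 ≤ x * q := by nlinarith
  have hd2 : -(x * q) ≤ a.1 * p.1 + a.2 * p.2 := by nlinarith
  have hxq : 0 < x + 2 * q := by linarith
  have hkey := key x q hx hq hsmall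
  have hQp : (enormR (a + (2 : ℝ) • p)) ^ 2 = a.1 ^ 2 + a.2 ^ 2 + 4 * (p.1 ^ 2 + p.2 ^ 2)
      + 4 * (a.1 * p.1 + a.2 * p.2) := by
    rw [enormR_sq]; simp [Prod.fst_add, Prod.snd_add, Prod.smul_fst, Prod.smul_snd,
      smul_eq_mul]; ring
  have hQm : (enormR (a - (2 : ℝ) • p)) ^ 2 = a.1 ^ 2 + a.2 ^ 2 + 4 * (p.1 ^ 2 + p.2 ^ 2)
      - 4 * (a.1 * p.1 + a.2 * p.2) := by
    rw [enormR_sq]; simp [Prod.fst_sub, Prod.snd_sub, Prod.smul_fst, Prod.smul_snd,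
      smul_eq_mul]; ring
  have hQppos : 0 < (enormR (a + (2 : ℝ) • p)) ^ 2 := by
    have := enormR_pos hap; positivity
  have hQmpos : 0 < (enormR (a - (2 : ℝ) • p)) ^ 2 := by
    have := enormR_pos ham; positivity
  have hQple : (enormR (a + (2 : ℝ) • p)) ^ 2 ≤ (x + 2 * q) ^ 2 := by
    rw [hQp]; nlinarith
  have hQmle : (enormR (a - (2 : ℝ) • p)) ^ 2 ≤ (x + 2 * q) ^ 2 := by
    rw [hQm]; nlinarith
  have hinvp : 1 / (x + 2 * q) ^ 2 ≤ 1 / (enormR (a + (2 : ℝ) • p)) ^ 2 :=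
    one_div_le_one_div_of_le hQppos hQple
  have hinvm : 1 / (x + 2 * q) ^ 2 ≤ 1 / (enormR (a - (2 : ℝ) • p)) ^ 2 :=
    one_div_le_one_div_of_le hQmpos hQmle
  have haux : 2 / q ^ 2 = 1 / q ^ 2 + 1 / q ^ 2 := by ring
  constructor <;> linarith
end

section
/- If |p| > √3 / (√2(2 − √3)), then there exists a lattice point a ∈ ℤ² satisfying |a| < (√3 − 1)|p|, |a + p| > |p|, and |a − p| > |p|. -/
/-- Euclidean norm of an integer lattice point in `ℤ²`. -/
noncomputable def enormZ (v : ℤ × ℤ) : ℝ :=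
  Real.sqrt ((v.1 : ℝ) ^ 2 + (v.2 : ℝ) ^ 2)

lemma aux_far (s3 t q E1 E2 u1 u2 x1 x2 : ℝ) (hs3sq : s3^2 = 3) (hs3pos : 0 < s3)
    (ht0 : 0 ≤ t) (hq0 : 0 ≤ q) (hq2 : q^2 = E1^2+E2^2) (hu : u1^2+u2^2 = 4*t^2)
    (hx1 : s3*x1 = E1 + u1) (hx2 : s3*x2 = E2 + u2) (hG2 : q < (2 - s3)*t) :
    t^2 < x1^2 + x2^2 := by
  have hcs : -(E1*u1 + E2*u2) ≤ q*(2*t) := by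
    nlinarith [sq_nonneg (E1*u2 - E2*u1), mul_nonneg hq0 ht0, sq_nonneg (E1*u1+E2*u2 + q*(2*t))]
  have h2q : s3*t < 2*t - q := by nlinarith
  have hsq2 : (s3*t)^2 < (2*t - q)^2 := by nlinarith [mul_nonneg hs3pos.le ht0]
  have h3X : 3*(x1^2+x2^2) = (E1+u1)^2 + (E2+u2)^2 := by
    rw [← hx1, ← hx2]; linear_combination -(x1^2+x2^2) * hs3sq
  have hexp : (2*t - q)^2 ≤ (E1+u1)^2 + (E2+u2)^2 := by nlinarith [hcs, hq2, hu]
  have h3t : (s3*t)^2 = 3*t^2 := by rw [mul_pow, hs3sq]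
  linarith

set_option maxHeartbeats 2000000 in
theorem exists_good_lattice_point (p : ℤ × ℤ)
    (hp : Real.sqrt 3 / (Real.sqrt 2 * (2 - Real.sqrt 3)) < enormZ p) :
    ∃ a : ℤ × ℤ,
      enormZ a < (Real.sqrt 3 - 1) * enormZ p ∧
      enormZ p < enormZ (a + p) ∧
      enormZ p < enormZ (a - p) := by
  set s3 := Real.sqrt 3 with hs3def
  set s2 := Real.sqrt 2 with hs2def
  have hs3sq : s3^2 = 3 := Real.sq_sqrt (by norm_num)
  have hs2sq : s2^2 = 2 := Real.sq_sqrt (by norm_num)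
  have hs3pos : 0 < s3 := Real.sqrt_pos.mpr (by norm_num)
  have hs2pos : 0 < s2 := Real.sqrt_pos.mpr (by norm_num)
  have hs3lt2 : s3 < 2 := by nlinarith
  have hs3gt1 : 1 < s3 := by nlinarith
  set p1 : ℝ := (p.1 : ℝ) with hp1def
  set p2 : ℝ := (p.2 : ℝ) with hp2def
  set t := enormZ p with htdef
  have ht2 : t^2 = p1^2 + p2^2 := Real.sq_sqrt (by positivity)
  have ht0 : 0 ≤ t := Real.sqrt_nonneg _
  have hden : 0 < s2 * (2 - s3) := by nlinarith
  have htpos : 0 < t := lt_trans (div_pos hs3pos hden) hp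
  have hA : s3 < s2 * (2 - s3) * t := by
    rw [div_lt_iff₀ hden] at hp; nlinarith [hp]
  have hG : s2*s3/2 < (2 - s3) * t := by
    nlinarith [mul_lt_mul_of_pos_left hA hs2pos]
  -- the lattice point
  set a1 : ℤ := round (-p2 / s3) with ha1def
  set a2 : ℤ := round (p1 / s3) with ha2def
  set E1 : ℝ := s3*(a1:ℝ) + p2 with hE1def
  set E2 : ℝ := s3*(a2:ℝ) - p1 with hE2def
  have hE1b : E1^2 ≤ 3/4 := by
    have h := abs_le.mp (abs_sub_round (-p2 / s3))
    have hd : (-p2/s3 - (a1:ℝ))^2 ≤ 1/4 := by nlinarith [h.1, h.2]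
    have hkey : E1 = -(s3 * (-p2/s3 - (a1:ℝ))) := by
      field_simp [hE1def]
      linear_combination hE1def
    have hsq : (-(s3 * (-p2/s3 - (a1:ℝ))))^2 = 3 * (-p2/s3 - (a1:ℝ))^2 := by
      rw [neg_sq, mul_pow, hs3sq]
    rw [hkey, hsq]; linarith
  have hE2b : E2^2 ≤ 3/4 := by
    have h := abs_le.mp (abs_sub_round (p1 / s3))
    have hd : (p1/s3 - (a2:ℝ))^2 ≤ 1/4 := by nlinarith [h.1, h.2]
    have hkey : E2 = -(s3 * (p1/s3 - (a2:ℝ))) := by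
      field_simp [hE2def]
      linear_combination hE2def
    have hsq : (-(s3 * (p1/s3 - (a2:ℝ))))^2 = 3 * (p1/s3 - (a2:ℝ))^2 := by
      rw [neg_sq, mul_pow, hs3sq]
    rw [hkey, hsq]; linarith
  set q : ℝ := Real.sqrt (E1^2 + E2^2) with hqdef
  have hq0 : 0 ≤ q := Real.sqrt_nonneg _
  have hq2 : q^2 = E1^2 + E2^2 := Real.sq_sqrt (by positivity)
  clear_value q E1 E2 t a1 a2
  have hqle : q ≤ s2*s3/2 := by
    have h632 : (s2*s3/2)^2 = 3/2 := by
      rw [div_pow, mul_pow, hs2sq, hs3sq]; norm_num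
    have hq32 : q^2 ≤ 3/2 := by rw [hq2]; linarith
    nlinarith [hq32, h632, hq0, mul_nonneg hs2pos.le hs3pos.le]
  have hG2 : q < (2 - s3) * t := lt_of_le_of_lt hqle hG
  refine ⟨(a1, a2), ?_, ?_, ?_⟩
  · -- |a| < (√3 - 1)|p|
    show Real.sqrt ((a1:ℝ)^2 + (a2:ℝ)^2) < (s3 - 1) * t
    rw [Real.sqrt_lt' (by nlinarith)]
    have hcs : E2*p1 - E1*p2 ≤ q*t := by
      nlinarith [sq_nonneg (E1*p1 + E2*p2), mul_nonneg hq0 ht0, hq2, ht2,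
        sq_nonneg (E2*p1 - E1*p2 - q*t)]
    have h3a : 3*((a1:ℝ)^2+(a2:ℝ)^2) = (E1 - p2)^2 + (E2 + p1)^2 := by
      have e1 : E1 - p2 = s3*(a1:ℝ) := by rw [hE1def]; ring
      have e2 : E2 + p1 = s3*(a2:ℝ) := by rw [hE2def]; ring
      rw [e1, e2]; linear_combination -((a1:ℝ)^2+(a2:ℝ)^2) * hs3sq
    have hqt : q + t < (3 - s3)*t := by nlinarith
    have hsq : (q + t)^2 < ((3 - s3)*t)^2 := by nlinarith [add_nonneg hq0 ht0]
    have hexp : (E1 - p2)^2 + (E2 + p1)^2 ≤ (q + t)^2 := by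
      nlinarith [hcs, hq2, ht2]
    have h3b : 3*((s3 - 1)*t)^2 = ((3 - s3)*t)^2 := by
      linear_combination 2*t^2*hs3sq
    linarith
  · -- |a + p| > |p|
    show t < enormZ ((a1, a2) + p)
    have heq : enormZ ((a1, a2) + p) = Real.sqrt (((a1:ℝ)+p1)^2 + ((a2:ℝ)+p2)^2) := by
      unfold enormZ
      norm_num [Prod.fst_add, Prod.snd_add]
      rw [hp1def, hp2def]
    rw [heq, Real.lt_sqrt ht0]
    exact aux_far s3 t q E1 E2 (s3*p1 - p2) (p1 + s3*p2) ((a1:ℝ)+p1) ((a2:ℝ)+p2)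
      hs3sq hs3pos ht0 hq0 hq2
      (by linear_combination (p1^2+p2^2) * hs3sq - 4 * ht2)
      (by rw [hE1def]; ring) (by rw [hE2def]; ring) hG2
  · -- |a - p| > |p|
    show t < enormZ ((a1, a2) - p)
    have heq : enormZ ((a1, a2) - p) = Real.sqrt (((a1:ℝ)-p1)^2 + ((a2:ℝ)-p2)^2) := by
      unfold enormZ
      norm_num [Prod.fst_sub, Prod.snd_sub]
      rw [hp1def, hp2def]
    rw [heq, Real.lt_sqrt ht0]
    exact aux_far s3 t q E1 E2 (-(s3*p1) - p2) (p1 - s3*p2) ((a1:ℝ)-p1) ((a2:ℝ)-p2)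
      hs3sq hs3pos ht0 hq0 hq2
      (by linear_combination (p1^2+p2^2) * hs3sq - 4 * ht2)
      (by rw [hE1def]; ring) (by rw [hE2def]; ring) hG2
end
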